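/- arXiv:2004.14082 — 2 statements merged into one kernel-verified Lean document; each statement's English description precedes it below -/
import Mathlib

section
/- Let ω > 0, β ∈ ℝ, and let μ₁, μ₂, ε₁, ε₂ > 0 satisfy κⱼ² := ω²μⱼεⱼ − β² > 0 for j = 1, 2, and let ξ₁ be a nonzero real number. Set μ̃ⱼ = μⱼ/κⱼ², ε̃ⱼ = εⱼ/κⱼ², βⱼ = β/κⱼ². If μ₁ ≠ μ₂, then the only vector (a₁, a₂, a₃, a₄) ∈ ℂ⁴ satisfying the homogeneous linear system a₁ − ia₂β₁ξ₁ + a₄ε̃₁ω|ξ₁| = 0, a₂μ̃₁ω|ξ₁| + a₃ + ia₄β₁ξ₁ = 0, a₁ − ia₂β₂ξ₁ − a₄ε̃₂ω|ξ₁| = 0, a₂μ̃₂ω|ξ₁| − a₃ − ia₄β₂ξ₁ = 0 is the trivial one, a₁ = a₂ = a₃ = a₄ = 0. -/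
open Complex

lemma key_ineq (w b1 b2 e1 e2 m1 m2 : ℝ)
    (he1 : 0 < e1) (he2 : 0 < e2) (hm1 : 0 < m1) (hm2 : 0 < m2)
    (h1 : b1^2 < w^2*e1*m1) (h2 : b2^2 < w^2*e2*m2) :
    (b1 - b2)^2 < w^2*(e1+e2)*(m1+m2) := by
  have hw : 0 < w^2 := by nlinarith [sq_nonneg b1, mul_pos he1 hm1]
  have hx : 0 < w^2*e1*m2 := by positivity
  have hy : 0 < w^2*e2*m1 := by positivity
  have hxy : (b1*b2)^2 < (w^2*e1*m2)*(w^2*e2*m1) := by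
    calc (b1*b2)^2 = b1^2*b2^2 := by ring
      _ < (w^2*e1*m1)*(w^2*e2*m2) := mul_lt_mul'' h1 h2 (sq_nonneg _) (sq_nonneg _)
      _ = (w^2*e1*m2)*(w^2*e2*m1) := by ring
  have hsqrt : |b1*b2| < Real.sqrt ((w^2*e1*m2)*(w^2*e2*m1)) := by
    rw [← Real.sqrt_sq_eq_abs]
    exact Real.sqrt_lt_sqrt (sq_nonneg _) hxy
  have ham : Real.sqrt ((w^2*e1*m2)*(w^2*e2*m1)) ≤ (w^2*e1*m2 + w^2*e2*m1)/2 := by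
    have h' : (w^2*e1*m2)*(w^2*e2*m1) ≤ ((w^2*e1*m2 + w^2*e2*m1)/2)^2 := by
      nlinarith [sq_nonneg (w^2*e1*m2 - w^2*e2*m1)]
    calc Real.sqrt ((w^2*e1*m2)*(w^2*e2*m1)) ≤ Real.sqrt (((w^2*e1*m2 + w^2*e2*m1)/2)^2) :=
          Real.sqrt_le_sqrt h'
      _ = (w^2*e1*m2 + w^2*e2*m1)/2 := Real.sqrt_sq (by positivity)
  have hkey : -(2*(b1*b2)) < w^2*e1*m2 + w^2*e2*m1 := by
    have := neg_abs_le (b1*b2); linarith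
  nlinarith [h1, h2, hkey]

/-- The homogeneous 4×4 linear system obtained from the Shapiro–Lopatinskij
condition on the interface `Γ₁` (Proposition 3.1) admits only the trivial
solution when `μ₁ ≠ μ₂`. -/
theorem stmt2 (ω β μ₁ μ₂ ε₁ ε₂ : ℝ) (hω : 0 < ω)
    (hμ₁ : 0 < μ₁) (hμ₂ : 0 < μ₂) (hε₁ : 0 < ε₁) (hε₂ : 0 < ε₂)
    (hκ₁ : 0 < ω ^ 2 * μ₁ * ε₁ - β ^ 2) (hκ₂ : 0 < ω ^ 2 * μ₂ * ε₂ - β ^ 2)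
    (hμ : μ₁ ≠ μ₂) (ξ₁ : ℝ) (hξ₁ : ξ₁ ≠ 0) (a₁ a₂ a₃ a₄ : ℂ)
    (h1 : a₁ - Complex.I * a₂ * ((β / (ω ^ 2 * μ₁ * ε₁ - β ^ 2) : ℝ) : ℂ) * (ξ₁ : ℂ)
        + a₄ * ((ε₁ / (ω ^ 2 * μ₁ * ε₁ - β ^ 2) : ℝ) : ℂ) * (ω : ℂ) * ((|ξ₁| : ℝ) : ℂ) = 0)
    (h2 : a₂ * ((μ₁ / (ω ^ 2 * μ₁ * ε₁ - β ^ 2) : ℝ) : ℂ) * (ω : ℂ) * ((|ξ₁| : ℝ) : ℂ)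
        + a₃ + Complex.I * a₄ * ((β / (ω ^ 2 * μ₁ * ε₁ - β ^ 2) : ℝ) : ℂ) * (ξ₁ : ℂ) = 0)
    (h3 : a₁ - Complex.I * a₂ * ((β / (ω ^ 2 * μ₂ * ε₂ - β ^ 2) : ℝ) : ℂ) * (ξ₁ : ℂ)
        - a₄ * ((ε₂ / (ω ^ 2 * μ₂ * ε₂ - β ^ 2) : ℝ) : ℂ) * (ω : ℂ) * ((|ξ₁| : ℝ) : ℂ) = 0)
    (h4 : a₂ * ((μ₂ / (ω ^ 2 * μ₂ * ε₂ - β ^ 2) : ℝ) : ℂ) * (ω : ℂ) * ((|ξ₁| : ℝ) : ℂ)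
        - a₃ - Complex.I * a₄ * ((β / (ω ^ 2 * μ₂ * ε₂ - β ^ 2) : ℝ) : ℂ) * (ξ₁ : ℂ) = 0) :
    a₁ = 0 ∧ a₂ = 0 ∧ a₃ = 0 ∧ a₄ = 0 := by
  set s : ℝ := |ξ₁| with hs
  set c₁ : ℝ := ω ^ 2 * μ₁ * ε₁ - β ^ 2 with hc₁
  set c₂ : ℝ := ω ^ 2 * μ₂ * ε₂ - β ^ 2 with hc₂
  push_cast at h1 h2 h3 h4
  have hc₁0 : c₁ ≠ 0 := ne_of_gt hκ₁
  have hc₂0 : c₂ ≠ 0 := ne_of_gt hκ₂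
  have hspos : (0:ℝ) < s := abs_pos.mpr hξ₁
  -- reduced parameters satisfy ω² ε̃ μ̃ > β̃²
  have hr₁ : (β/c₁)^2 < ω^2*(ε₁/c₁)*(μ₁/c₁) := by
    have hid : ω^2*(ε₁/c₁)*(μ₁/c₁) - (β/c₁)^2 = 1/c₁ := by
      field_simp
      rw [hc₁]; ring
    have := one_div_pos.mpr hκ₁
    linarith
  have hr₂ : (β/c₂)^2 < ω^2*(ε₂/c₂)*(μ₂/c₂) := by
    have hid : ω^2*(ε₂/c₂)*(μ₂/c₂) - (β/c₂)^2 = 1/c₂ := by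
      field_simp
      rw [hc₂]; ring
    have := one_div_pos.mpr hκ₂
    linarith
  have K := key_ineq ω (β/c₁) (β/c₂) (ε₁/c₁) (ε₂/c₂) (μ₁/c₁) (μ₂/c₂)
    (div_pos hε₁ hκ₁) (div_pos hε₂ hκ₂) (div_pos hμ₁ hκ₁) (div_pos hμ₂ hκ₂) hr₁ hr₂
  have hx2 : (0:ℝ) < ξ₁^2 := by positivity
  have key : ((β/c₁ - β/c₂)*ξ₁)^2 < ((ε₁/c₁ + ε₂/c₂)*ω*s)*((μ₁/c₁ + μ₂/c₂)*ω*s) := by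
    calc ((β/c₁ - β/c₂)*ξ₁)^2 = (β/c₁ - β/c₂)^2 * ξ₁^2 := by ring
      _ < (ω^2*(ε₁/c₁ + ε₂/c₂)*(μ₁/c₁ + μ₂/c₂)) * ξ₁^2 := by
          exact mul_lt_mul_of_pos_right K hx2
      _ = ((ε₁/c₁ + ε₂/c₂)*ω*s)*((μ₁/c₁ + μ₂/c₂)*ω*s) := by
          rw [hs, ← _root_.sq_abs ξ₁]; ring
  have hdet : (((ε₁/c₁ + ε₂/c₂)*ω*s)*((μ₁/c₁ + μ₂/c₂)*ω*s) - ((β/c₁ - β/c₂)*ξ₁)^2 : ℝ) ≠ 0 :=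
    ne_of_gt (by linarith)
  -- a₂ = 0
  have ha₂ : a₂ = 0 := by
    have h5 : ((((ε₁/c₁ + ε₂/c₂)*ω*s)*((μ₁/c₁ + μ₂/c₂)*ω*s) - ((β/c₁ - β/c₂)*ξ₁)^2 : ℝ) : ℂ)
        * a₂ = 0 := by
      push_cast
      linear_combination (((ε₁:ℂ)/c₁ + ε₂/c₂)*ω*s) * h2 + (((ε₁:ℂ)/c₁ + ε₂/c₂)*ω*s) * h4
        - Complex.I * (((β:ℂ)/c₁ - β/c₂)*ξ₁) * h1 + Complex.I * (((β:ℂ)/c₁ - β/c₂)*ξ₁) * h3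
        - (((β:ℂ)/c₁ - β/c₂)*ξ₁)^2 * a₂ * Complex.I_sq
    rcases mul_eq_zero.mp h5 with h | h
    · exact absurd h (Complex.ofReal_ne_zero.mpr hdet)
    · exact h
  -- a₄ = 0
  have hEpos : (0:ℝ) < (ε₁/c₁ + ε₂/c₂)*ω*s := by positivity
  have ha₄ : a₄ = 0 := by
    have h5 : ((((ε₁/c₁ + ε₂/c₂)*ω*s : ℝ)) : ℂ) * a₄ = 0 := by
      push_cast
      linear_combination h1 - h3 + Complex.I * (((β:ℂ)/c₁ - β/c₂)*ξ₁) * ha₂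
    rcases mul_eq_zero.mp h5 with h | h
    · exact absurd h (Complex.ofReal_ne_zero.mpr (ne_of_gt hEpos))
    · exact h
  refine ⟨?_, ha₂, ?_, ha₄⟩
  · linear_combination h1 + Complex.I * ((β:ℂ)/c₁) * ξ₁ * ha₂ - ((ε₁:ℂ)/c₁)*ω*s * ha₄
  · linear_combination h2 - ((μ₁:ℂ)/c₁)*ω*s * ha₂ - Complex.I * ((β:ℂ)/c₁) * ξ₁ * ha₄
end

section
/- Let ω > 0, β ∈ ℝ, and let μ₁, μ₂, ε₁, ε₂ > 0 satisfy κⱼ² := ω²μⱼεⱼ − β² > 0 for j = 1, 2, with μ₁ ≠ μ₂; set μ̃ⱼ = μⱼ/κⱼ², ε̃ⱼ = εⱼ/κⱼ², βⱼ = β/κⱼ². Let ξ₁ be a nonzero real number and let a₁, a₂, a₃, a₄ ∈ ℂ be such that in ℂ[X]: (X + i|ξ₁|)² divides both (X² + ξ₁²)·((a₁ − ia₂β₁ξ₁) + (ia₄ε̃₁ω)X) and (X² + ξ₁²)·((a₃ + ia₄β₁ξ₁) + (ia₂μ̃₁ω)X), and (X − i|ξ₁|)² divides both (X² + ξ₁²)·((a₁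 − ia₂β₂ξ₁) + (ia₄ε̃₂ω)X) and (X² + ξ₁²)·((a₃ + ia₄β₂ξ₁) + (ia₂μ̃₂ω)X). Then a₁ = a₂ = a₃ = a₄ = 0. -/
open Polynomial Complex

lemma key₁ (a c d : ℂ) (ha : a ≠ 0)
    (h : (X + C a) ^ 2 ∣ (X ^ 2 - C (a ^ 2)) * (C c + C d * X)) : c = d * a := by
  have hfac : (X : ℂ[X]) ^ 2 - C (a ^ 2) = (X + C a) * (X - C a) := by
    rw [map_pow]; ring
  rw [hfac, sq, mul_assoc, mul_dvd_mul_iff_left (X_add_C_ne_zero a)] at h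
  rw [show (X + C a : ℂ[X]) = X - C (-a) by rw [map_neg, sub_neg_eq_add],
    dvd_iff_isRoot] at h
  simp only [IsRoot, eval_mul, eval_add, eval_sub, eval_X, eval_C] at h
  have h2a : -a - a ≠ 0 := by
    intro h0; apply ha; linear_combination -h0/2
  have := mul_eq_zero.mp h
  rcases this with h' | h'
  · exact absurd h' h2a
  · linear_combination h'

lemma key₂ (a c d : ℂ) (ha : a ≠ 0)
    (h : (X - C a) ^ 2 ∣ (X ^ 2 - C (a ^ 2)) * (C c + C d * X)) : c = -(d * a) := by
  have := key₁ (-a) c d (neg_ne_zero.mpr ha)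
    (by rw [map_neg, ← sub_eq_add_neg, neg_sq]; exact h)
  rw [this]; ring

/-- The algebraic core of Proposition 3.1: if the Shapiro–Lopatinskij congruences
modulo `a⁻ = (X + i|ξ₁|)²` and `a⁺ = (X − i|ξ₁|)²` hold (expressed as polynomial
divisibilities in `ℂ[X]`) with the reduced material parameters
`μ̃ⱼ = μⱼ/κⱼ²`, `ε̃ⱼ = εⱼ/κⱼ²`, `βⱼ = β/κⱼ²`, `κⱼ² = ω²μⱼεⱼ − β² > 0`, and
`μ₁ ≠ μ₂`, then `a₁ = a₂ = a₃ = a₄ = 0`. -/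
theorem stmt7 (ω β μ₁ μ₂ ε₁ ε₂ : ℝ) (hω : 0 < ω)
    (hμ₁ : 0 < μ₁) (hμ₂ : 0 < μ₂) (hε₁ : 0 < ε₁) (hε₂ : 0 < ε₂)
    (hκ₁ : 0 < ω ^ 2 * μ₁ * ε₁ - β ^ 2) (hκ₂ : 0 < ω ^ 2 * μ₂ * ε₂ - β ^ 2)
    (hμ : μ₁ ≠ μ₂) (ξ₁ : ℝ) (hξ₁ : ξ₁ ≠ 0) (a₁ a₂ a₃ a₄ : ℂ)
    (h1 : (X + C (Complex.I * ((|ξ₁| : ℝ) : ℂ))) ^ 2 ∣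
        (X ^ 2 + C ((ξ₁ : ℂ) ^ 2)) *
          (C (a₁ - Complex.I * a₂ * ((β / (ω ^ 2 * μ₁ * ε₁ - β ^ 2) : ℝ) : ℂ) * (ξ₁ : ℂ))
            + C (Complex.I * a₄ * ((ε₁ / (ω ^ 2 * μ₁ * ε₁ - β ^ 2) : ℝ) : ℂ) * (ω : ℂ)) * X))
    (h2 : (X + C (Complex.I * ((|ξ₁| : ℝ) : ℂ))) ^ 2 ∣
        (X ^ 2 + C ((ξ₁ : ℂ) ^ 2)) *
          (C (a₃ + Complex.I * a₄ * ((β / (ω ^ 2 * μ₁ * ε₁ - β ^ 2) : ℝ) : ℂ) * (ξ₁ : ℂ))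
            + C (Complex.I * a₂ * ((μ₁ / (ω ^ 2 * μ₁ * ε₁ - β ^ 2) : ℝ) : ℂ) * (ω : ℂ)) * X))
    (h3 : (X - C (Complex.I * ((|ξ₁| : ℝ) : ℂ))) ^ 2 ∣
        (X ^ 2 + C ((ξ₁ : ℂ) ^ 2)) *
          (C (a₁ - Complex.I * a₂ * ((β / (ω ^ 2 * μ₂ * ε₂ - β ^ 2) : ℝ) : ℂ) * (ξ₁ : ℂ))
            + C (Complex.I * a₄ * ((ε₂ / (ω ^ 2 * μ₂ * ε₂ - β ^ 2) : ℝ) : ℂ) * (ω : ℂ)) * X))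
    (h4 : (X - C (Complex.I * ((|ξ₁| : ℝ) : ℂ))) ^ 2 ∣
        (X ^ 2 + C ((ξ₁ : ℂ) ^ 2)) *
          (C (a₃ + Complex.I * a₄ * ((β / (ω ^ 2 * μ₂ * ε₂ - β ^ 2) : ℝ) : ℂ) * (ξ₁ : ℂ))
            + C (Complex.I * a₂ * ((μ₂ / (ω ^ 2 * μ₂ * ε₂ - β ^ 2) : ℝ) : ℂ) * (ω : ℂ)) * X)) :
    a₁ = 0 ∧ a₂ = 0 ∧ a₃ = 0 ∧ a₄ = 0 := by
  set a : ℂ := Complex.I * ((|ξ₁| : ℝ) : ℂ) with hadef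
  have hT : ((|ξ₁| : ℝ) : ℂ) ^ 2 = ((ξ₁ : ℝ) : ℂ) ^ 2 := by
    norm_cast; exact sq_abs ξ₁
  have hane : a ≠ 0 := by
    simp [hadef, Complex.I_ne_zero, hξ₁]
  have ha2 : a ^ 2 = -(((ξ₁ : ℝ) : ℂ) ^ 2) := by
    rw [hadef, mul_pow, Complex.I_sq, hT]; ring
  have hX : (X : ℂ[X]) ^ 2 + C (((ξ₁ : ℝ) : ℂ) ^ 2) = X ^ 2 - C (a ^ 2) := by
    rw [ha2, map_neg, sub_neg_eq_add]
  rw [hX] at h1 h2 h3 h4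
  have e1 := key₁ a _ _ hane h1
  have e2 := key₁ a _ _ hane h2
  have e3 := key₂ a _ _ hane h3
  have e4 := key₂ a _ _ hane h4
  push_cast at e1 e2 e3 e4
  have hK₁ : ((ω : ℂ) ^ 2 * μ₁ * ε₁ - (β : ℂ) ^ 2) ≠ 0 := by
    have : ((ω ^ 2 * μ₁ * ε₁ - β ^ 2 : ℝ) : ℂ) ≠ 0 := by
      exact_mod_cast ne_of_gt hκ₁
    push_cast at this; exact this
  have hK₂ : ((ω : ℂ) ^ 2 * μ₂ * ε₂ - (β : ℂ) ^ 2) ≠ 0 := by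
    have : ((ω ^ 2 * μ₂ * ε₂ - β ^ 2 : ℝ) : ℂ) ≠ 0 := by
      exact_mod_cast ne_of_gt hκ₂
    push_cast at this; exact this
  field_simp at e1 e2 e3 e4
  rw [hadef] at e1 e2 e3 e4
  set T : ℂ := ((|ξ₁| : ℝ) : ℂ) with hTdef
  set K₁ : ℂ := (ω : ℂ) ^ 2 * μ₁ * ε₁ - (β : ℂ) ^ 2 with hK₁def
  set K₂ : ℂ := (ω : ℂ) ^ 2 * μ₂ * ε₂ - (β : ℂ) ^ 2 with hK₂def
  have hI : Complex.I ^ 2 = -1 := Complex.I_sq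
  have hT2 : T ^ 2 = ((ξ₁ : ℝ) : ℂ) ^ 2 := hT
  have A : Complex.I * a₂ * β * ξ₁ * (K₂ - K₁)
      = a₄ * ω * T * ((ε₁ : ℂ) * K₂ + (ε₂ : ℂ) * K₁) := by
    linear_combination K₁ * e3 - K₂ * e1 - (a₄ * ω * T * ((ε₁ : ℂ) * K₂ + (ε₂ : ℂ) * K₁)) * hI
  have B : Complex.I * a₄ * β * ξ₁ * (K₂ - K₁)
      = -(a₂ * ω * T * ((μ₁ : ℂ) * K₂ + (μ₂ : ℂ) * K₁)) := by
    linear_combination K₂ * e2 - K₁ * e4 + (a₂ * ω * T * ((μ₁ : ℂ) * K₂ + (μ₂ : ℂ) * K₁)) * hI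
  have hQ : ((ω : ℂ) ^ 2 * (ξ₁ : ℂ) ^ 2 * ((ε₁ : ℂ) * K₂ + (ε₂ : ℂ) * K₁) *
        ((μ₁ : ℂ) * K₂ + (μ₂ : ℂ) * K₁)
      - (β : ℂ) ^ 2 * (ξ₁ : ℂ) ^ 2 * (K₂ - K₁) ^ 2) * a₂ = 0 := by
    linear_combination (Complex.I * β * ξ₁ * (K₂ - K₁)) * A
      + ((ω : ℂ) * T * ((ε₁ : ℂ) * K₂ + (ε₂ : ℂ) * K₁)) * B
      - ((β : ℂ) ^ 2 * (ξ₁ : ℂ) ^ 2 * (K₂ - K₁) ^ 2 * a₂) * hI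
      - ((ω : ℂ) ^ 2 * ((ε₁ : ℂ) * K₂ + (ε₂ : ℂ) * K₁) * ((μ₁ : ℂ) * K₂ + (μ₂ : ℂ) * K₁) * a₂) * hT2
  -- the scalar factor is nonzero
  have hnr : (0 : ℝ) < ω ^ 2 * ξ₁ ^ 2 *
        ((ε₁ * (ω ^ 2 * μ₂ * ε₂ - β ^ 2) + ε₂ * (ω ^ 2 * μ₁ * ε₁ - β ^ 2)) *
          (μ₁ * (ω ^ 2 * μ₂ * ε₂ - β ^ 2) + μ₂ * (ω ^ 2 * μ₁ * ε₁ - β ^ 2)))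
      - β ^ 2 * ξ₁ ^ 2 * ((ω ^ 2 * μ₂ * ε₂ - β ^ 2) - (ω ^ 2 * μ₁ * ε₁ - β ^ 2)) ^ 2 := by
    have hid : ω ^ 2 * ξ₁ ^ 2 *
          ((ε₁ * (ω ^ 2 * μ₂ * ε₂ - β ^ 2) + ε₂ * (ω ^ 2 * μ₁ * ε₁ - β ^ 2)) *
            (μ₁ * (ω ^ 2 * μ₂ * ε₂ - β ^ 2) + μ₂ * (ω ^ 2 * μ₁ * ε₁ - β ^ 2)))
        - β ^ 2 * ξ₁ ^ 2 * ((ω ^ 2 * μ₂ * ε₂ - β ^ 2) - (ω ^ 2 * μ₁ * ε₁ - β ^ 2)) ^ 2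
        = ξ₁ ^ 2 * ((ω ^ 2 * μ₁ * ε₁ - β ^ 2) * (ω ^ 2 * μ₂ * ε₂ - β ^ 2) *
            ((ω ^ 2 * μ₁ * ε₁ - β ^ 2) + (ω ^ 2 * μ₂ * ε₂ - β ^ 2)
              + ω ^ 2 * (ε₁ * μ₂ + ε₂ * μ₁) + 2 * β ^ 2)) := by ring
    rw [hid]
    have h₁ : (0 : ℝ) < ξ₁ ^ 2 := by positivity
    have h₂ : (0 : ℝ) < (ω ^ 2 * μ₁ * ε₁ - β ^ 2) + (ω ^ 2 * μ₂ * ε₂ - β ^ 2)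
        + ω ^ 2 * (ε₁ * μ₂ + ε₂ * μ₁) + 2 * β ^ 2 := by positivity
    positivity
  have hnc : ((ω : ℂ) ^ 2 * (ξ₁ : ℂ) ^ 2 * ((ε₁ : ℂ) * K₂ + (ε₂ : ℂ) * K₁) *
        ((μ₁ : ℂ) * K₂ + (μ₂ : ℂ) * K₁)
      - (β : ℂ) ^ 2 * (ξ₁ : ℂ) ^ 2 * (K₂ - K₁) ^ 2) ≠ 0 := by
    have : ((ω ^ 2 * ξ₁ ^ 2 *
        ((ε₁ * (ω ^ 2 * μ₂ * ε₂ - β ^ 2) + ε₂ * (ω ^ 2 * μ₁ * ε₁ - β ^ 2)) *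
          (μ₁ * (ω ^ 2 * μ₂ * ε₂ - β ^ 2) + μ₂ * (ω ^ 2 * μ₁ * ε₁ - β ^ 2)))
      - β ^ 2 * ξ₁ ^ 2 * ((ω ^ 2 * μ₂ * ε₂ - β ^ 2) - (ω ^ 2 * μ₁ * ε₁ - β ^ 2)) ^ 2 : ℝ) : ℂ) ≠ 0 := by
      exact_mod_cast ne_of_gt hnr
    push_cast at this
    rw [hK₁def, hK₂def]
    convert this using 2 <;> ring
  have ha₂ : a₂ = 0 := by
    rcases mul_eq_zero.mp hQ with h | h
    · exact absurd h hnc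
    · exact h
  have hTne : T ≠ 0 := by
    rw [hTdef]
    exact_mod_cast abs_ne_zero.mpr hξ₁
  have hωne : (ω : ℂ) ≠ 0 := by exact_mod_cast ne_of_gt hω
  have hEne : ((ε₁ : ℂ) * K₂ + (ε₂ : ℂ) * K₁) ≠ 0 := by
    have : ((ε₁ * (ω ^ 2 * μ₂ * ε₂ - β ^ 2) + ε₂ * (ω ^ 2 * μ₁ * ε₁ - β ^ 2) : ℝ) : ℂ) ≠ 0 := by
      exact_mod_cast ne_of_gt (by positivity :
        (0:ℝ) < ε₁ * (ω ^ 2 * μ₂ * ε₂ - β ^ 2) + ε₂ * (ω ^ 2 * μ₁ * ε₁ - β ^ 2))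
    push_cast at this
    rw [hK₁def, hK₂def]
    convert this using 1 <;> ring
  have ha₄ : a₄ = 0 := by
    rw [ha₂] at A
    have : a₄ * ω * T * ((ε₁ : ℂ) * K₂ + (ε₂ : ℂ) * K₁) = 0 := by linear_combination -A
    rcases mul_eq_zero.mp this with h | h
    · rcases mul_eq_zero.mp h with h' | h'
      · rcases mul_eq_zero.mp h' with h'' | h''
        · exact h''
        · exact absurd h'' hωne
      · exact absurd h' hTne
    · exact absurd h hEne
  have hK₁ne : K₁ ≠ 0 := hK₁
  have ha₁ : a₁ = 0 := by
    rw [ha₂, ha₄] at e1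
    have : a₁ * K₁ = 0 := by linear_combination e1
    rcases mul_eq_zero.mp this with h | h
    · exact h
    · exact absurd h hK₁ne
  have ha₃ : a₃ = 0 := by
    rw [ha₂, ha₄] at e2
    have : a₃ * K₁ = 0 := by linear_combination e2
    rcases mul_eq_zero.mp this with h | h
    · exact h
    · exact absurd h hK₁ne
  exact ⟨ha₁, ha₂, ha₃, ha₄⟩
end
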